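/- Let X ∼ N(μ, I_p) and let ζ(x,θ) = x + ∇ log m(x) be the posterior mean under a mixture marginal m(x) = Σ_{j=0}^d w_j g_j(x). If each g_j and ∇g_j is almost differentiable and E|∇²g_j(X_i)/g_j(X_i)| < ∞ and E(∇ log g_j(X_i))² < ∞ for all i,j, then the risk satisfies E Σ_{i=1}^p (μ_i − ζ(X_i,θ))² = p − E Σ_{i=1}^p D(X_i), where D(x) = Σ_{j=0}^d ρ_j(x)D_j(x) − Σ_{0≤j<k≤d} ρ_j(x)ρ_k(x)(ζ_j(x)−ζ_k(x))², with ρ_j(x) = w_j g_j(x)/m(x), D_j(x) = (∇ log g_j(x))² − 2∇²g_j(x)/g_j(x), and ζ_j(x) = x + ∇ log g_j(x). -/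

import Mathlib

open MeasureTheory Real BigOperators

/-- Standard normal density. -/
noncomputable def stdN (x : ℝ) : ℝ := (Real.sqrt (2 * Real.pi))⁻¹ * Real.exp (-x ^ 2 / 2)

/-- Mixture marginal density `m(x) = ∑_{j=0}^d w_j g_j(x)`. -/
noncomputable def mmix (d : ℕ) (w : Fin (d + 1) → ℝ) (g : Fin (d + 1) → ℝ → ℝ) (x : ℝ) : ℝ :=
  ∑ j : Fin (d + 1), w j * g j x

/-- Posterior mean (Tweedie's formula) `ζ(x) = x + ∇ log m(x)`. -/
noncomputable def zeta (d : ℕ) (w : Fin (d + 1) → ℝ) (g : Fin (d + 1) → ℝ → ℝ) (x : ℝ) : ℝ :=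
  x + deriv (fun y => Real.log (mmix d w g y)) x

/-- Posterior component probabilities `ρ_j(x) = w_j g_j(x)/m(x)`. -/
noncomputable def rho (d : ℕ) (w : Fin (d + 1) → ℝ) (g : Fin (d + 1) → ℝ → ℝ)
    (j : Fin (d + 1)) (x : ℝ) : ℝ :=
  w j * g j x / mmix d w g x

/-- Component posterior means `ζ_j(x) = x + ∇ log g_j(x)`. -/
noncomputable def zetaj (d : ℕ) (g : Fin (d + 1) → ℝ → ℝ) (j : Fin (d + 1)) (x : ℝ) : ℝ :=
  x + deriv (fun y => Real.log (g j y)) x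

/-- `D_j(x) = (∇ log g_j(x))² − 2 ∇²g_j(x)/g_j(x)`. -/
noncomputable def Dj (d : ℕ) (g : Fin (d + 1) → ℝ → ℝ) (j : Fin (d + 1)) (x : ℝ) : ℝ :=
  (deriv (fun y => Real.log (g j y)) x) ^ 2 - 2 * deriv (deriv (g j)) x / g j x

/-- The unbiased risk-reduction function
`D(x) = ∑_j ρ_j D_j − ∑_{j<k} ρ_j ρ_k (ζ_j − ζ_k)²`. -/
noncomputable def Dfun (d : ℕ) (w : Fin (d + 1) → ℝ) (g : Fin (d + 1) → ℝ → ℝ) (x : ℝ) : ℝ :=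
  (∑ j : Fin (d + 1), rho d w g j x * Dj d g j x) -
    ∑ j : Fin (d + 1), ∑ k : Fin (d + 1),
      if j < k then rho d w g j x * rho d w g k x * (zetaj d g j x - zetaj d g k x) ^ 2 else 0


/-!
Write `m` for the mixture marginal and `s = m'/m`, so that `ζ(x) = x + s(x)`. Stein's identity
`E[(X - c) f(X)] = E[f'(X)]` for `X ∼ N(c, 1)` turns the risk `E(c - X - s(X))²` into
`1 + E[s(X)² + 2 s'(X)]`, and `s' = m''/m - s²`. It remains to identify `s² - 2 m''/m` with `D`:
with `a_j = g_j'/g_j` one has `s = Σ ρ_j a_j` and `m''/m = Σ ρ_j g_j''/g_j`, while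
`Σ_{j<k} ρ_j ρ_k (a_j - a_k)²` is the variance `Σ ρ_j a_j² - (Σ ρ_j a_j)²` of `a` under `ρ`.
The same two expressions give `s² ≤ Σ a_j²` and `|m''/m| ≤ Σ |g_j''/g_j|`, which transfer the
integrability assumptions on the components to the mixture.
-/

lemma MeasureTheory.Integrable.mul_mul_of_sq_mul {α : Type*} [MeasurableSpace α] {μ : Measure α}
    {u v φ : α → ℝ} (hu : AEStronglyMeasurable u μ) (hv : AEStronglyMeasurable v μ)
    (hφ : AEStronglyMeasurable φ μ) (hφ0 : ∀ x, 0 ≤ φ x)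
    (hu2 : Integrable (fun x => u x ^ 2 * φ x) μ) (hv2 : Integrable (fun x => v x ^ 2 * φ x) μ) :
    Integrable (fun x => u x * v x * φ x) μ := by
  refine (hu2.add hv2).mono' ((hu.mul hv).mul hφ) (ae_of_all _ fun x => ?_)
  rw [Pi.add_apply, Real.norm_eq_abs, abs_mul, abs_mul, abs_of_nonneg (hφ0 x), ← add_mul]
  refine mul_le_mul_of_nonneg_right ?_ (hφ0 x)
  nlinarith [two_mul_le_add_sq |u x| |v x|, sq_abs (u x), sq_abs (v x), abs_nonneg (u x),
    abs_nonneg (v x)]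

section Gaussian

lemma stdN_sub_eq_gaussianPDFReal (c x : ℝ) :
    stdN (x - c) = ProbabilityTheory.gaussianPDFReal c 1 x := by
  simp [stdN, ProbabilityTheory.gaussianPDFReal]

lemma stdN_pos (x : ℝ) : 0 < stdN x := by
  unfold stdN; positivity

lemma continuous_stdN : Continuous stdN := by
  unfold stdN; fun_prop

lemma hasDerivAt_stdN (x : ℝ) : HasDerivAt stdN (-x * stdN x) x := by
  have h : HasDerivAt (fun y : ℝ => -y ^ 2 / 2) (-x) x :=
    ((hasDerivAt_pow 2 x).neg.div_const 2).congr_deriv (by ring)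
  unfold stdN
  exact ((h.exp).const_mul (Real.sqrt (2 * Real.pi))⁻¹).congr_deriv (by ring)

lemma integrable_stdN_sub (c : ℝ) : Integrable (fun x => stdN (x - c)) := by
  simpa only [stdN_sub_eq_gaussianPDFReal] using ProbabilityTheory.integrable_gaussianPDFReal c 1

lemma integral_stdN_sub (c : ℝ) : ∫ x, stdN (x - c) = 1 := by
  simpa only [stdN_sub_eq_gaussianPDFReal] using
    ProbabilityTheory.integral_gaussianPDFReal_eq_one c one_ne_zero

lemma integrable_sq_mul_stdN_sub (c : ℝ) : Integrable (fun x => (x - c) ^ 2 * stdN (x - c)) := by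
  have h := (integrable_rpow_mul_exp_neg_mul_sq (by norm_num : (0:ℝ) < 1/2)
    (by norm_num : (-1:ℝ) < 2)).const_mul (Real.sqrt (2 * Real.pi))⁻¹
  have h0 : Integrable (fun x : ℝ => x ^ 2 * stdN x) := by
    refine h.congr (ae_of_all _ fun x => ?_)
    simp only [stdN]
    norm_cast
    ring_nf
  exact h0.comp_sub_right c

/-- Stein's identity. -/
lemma integral_sub_mul_mul_stdN_sub (c : ℝ) {f f' : ℝ → ℝ} (hf : ∀ x, HasDerivAt f (f' x) x)
    (hxf : Integrable (fun x => (x - c) * f x * stdN (x - c)))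
    (hf' : Integrable (fun x => f' x * stdN (x - c)))
    (hf0 : Integrable (fun x => f x * stdN (x - c))) :
    ∫ x, (x - c) * f x * stdN (x - c) = ∫ x, f' x * stdN (x - c) := by
  have hφ : ∀ x, HasDerivAt (fun y => stdN (y - c)) (-(x - c) * stdN (x - c)) x := fun x => by
    simpa using (hasDerivAt_stdN (x - c)).comp_sub_const x c
  have hxf' : Integrable (f * fun x => -(x - c) * stdN (x - c)) :=
    hxf.neg.congr (ae_of_all _ fun x => by simp only [Pi.mul_apply, Pi.neg_apply]; ring)
  have := integral_mul_deriv_eq_deriv_mul_of_integrable (fun x _ => hf x) (fun x _ => hφ x)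
    hxf' hf' hf0
  simp only [mul_neg, neg_mul, integral_neg, neg_inj] at this
  simpa [mul_comm, mul_left_comm, mul_assoc] using this

lemma integrable_sub_mul_stdN_sub (c : ℝ) : Integrable (fun x => (x - c) * stdN (x - c)) := by
  simpa using Integrable.mul_mul_of_sq_mul (u := fun _ => 1) (v := fun x => x - c)
    aestronglyMeasurable_const (by fun_prop)
    (continuous_stdN.comp (by fun_prop)).aestronglyMeasurable (fun x => (stdN_pos _).le) (by simpa using integrable_stdN_sub c) (integrable_sq_mul_stdN_sub c)

lemma integral_sq_mul_stdN_sub (c : ℝ) : ∫ x, (x - c) ^ 2 * stdN (x - c) = 1 := by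
  have h := integral_sub_mul_mul_stdN_sub c (fun x => (hasDerivAt_id' x).sub_const c)
    (by simpa [sq] using integrable_sq_mul_stdN_sub c) (by simpa using integrable_stdN_sub c)
    (integrable_sub_mul_stdN_sub c)
  simpa [sq, integral_stdN_sub] using h

end Gaussian

/-- Stein's unbiased risk estimate. -/
theorem integral_sq_sub_add_mul_stdN_sub (c : ℝ) {h h' : ℝ → ℝ}
    (hh : ∀ x, HasDerivAt h (h' x) x) (hh2 : Integrable (fun x => h x ^ 2 * stdN (x - c)))
    (hh' : Integrable (fun x => h' x * stdN (x - c))) :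
    ∫ x, (c - (x + h x)) ^ 2 * stdN (x - c) = 1 + ∫ x, (h x ^ 2 + 2 * h' x) * stdN (x - c) := by
  have hφ : AEStronglyMeasurable (fun x => stdN (x - c)) :=
    (continuous_stdN.comp (by fun_prop)).aestronglyMeasurable
  have hh_meas : AEStronglyMeasurable h :=
    (continuous_iff_continuousAt.2 fun x => (hh x).continuousAt).aestronglyMeasurable
  have hhφ : Integrable (fun x => h x * stdN (x - c)) := by
    simpa using Integrable.mul_mul_of_sq_mul (u := fun _ => 1) aestronglyMeasurable_const
      hh_meas hφ (fun x => (stdN_pos _).le) (by simpa using integrable_stdN_sub c) hh2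
  have hxhφ : Integrable (fun x => (x - c) * h x * stdN (x - c)) :=
    Integrable.mul_mul_of_sq_mul (by fun_prop) hh_meas hφ (fun x => (stdN_pos _).le)
      (integrable_sq_mul_stdN_sub c) hh2
  have hexpand : ∫ x, (c - (x + h x)) ^ 2 * stdN (x - c)
      = (∫ x, (x - c) ^ 2 * stdN (x - c)) + 2 * (∫ x, (x - c) * h x * stdN (x - c))
        + ∫ x, h x ^ 2 * stdN (x - c) := by
    rw [← integral_const_mul, ← integral_add (integrable_sq_mul_stdN_sub c) (hxhφ.const_mul 2),
      ← integral_add ((integrable_sq_mul_stdN_sub c).fun_add (hxhφ.const_mul 2)) hh2]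
    congr 1; ext x; ring
  have hsplit : ∫ x, (h x ^ 2 + 2 * h' x) * stdN (x - c)
      = (∫ x, h x ^ 2 * stdN (x - c)) + 2 * ∫ x, h' x * stdN (x - c) := by
    rw [← integral_const_mul, ← integral_add hh2 (hh'.const_mul 2)]
    congr 1; ext x; ring
  rw [hexpand, hsplit, integral_sq_mul_stdN_sub, integral_sub_mul_mul_stdN_sub c hh hxhφ hh' hhφ]
  ring

section Tweedie

variable {m : ℝ → ℝ} (hm : ∀ x, 0 < m x) (hm1 : Differentiable ℝ m)
  (hm2 : Differentiable ℝ (deriv m))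
include hm hm1 hm2

lemma hasDerivAt_deriv_div_self (x : ℝ) :
    HasDerivAt (fun y => deriv m y / m y)
      (deriv (deriv m) x / m x - (deriv m x / m x) ^ 2) x := by
  refine ((hm2 x).hasDerivAt.div (hm1 x).hasDerivAt (hm x).ne').congr_deriv ?_
  field_simp [(hm x).ne']

theorem integral_sq_sub_tweedie_mul_stdN_sub (c : ℝ)
    (hs : Integrable (fun x => (deriv m x / m x) ^ 2 * stdN (x - c)))
    (hm'' : Integrable (fun x => deriv (deriv m) x / m x * stdN (x - c))) :
    ∫ x, (c - (x + deriv m x / m x)) ^ 2 * stdN (x - c)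
      = 1 - ∫ x, ((deriv m x / m x) ^ 2 - 2 * (deriv (deriv m) x / m x)) * stdN (x - c) := by
  rw [integral_sq_sub_add_mul_stdN_sub c (hasDerivAt_deriv_div_self hm hm1 hm2) hs
    (by simpa only [sub_mul] using hm''.sub' hs), sub_eq_add_neg, ← integral_neg]
  congr 2; ext x; ring

end Tweedie

section WeightedSums

variable {ι : Type*} [Fintype ι]

lemma sum_sum_ite_lt_eq_half [LinearOrder ι] (f : ι → ι → ℝ) (hsymm : ∀ j k, f j k = f k j)
    (hdiag : ∀ j, f j j = 0) :
    ∑ j, ∑ k, (if j < k then f j k else 0) = (∑ j, ∑ k, f j k) / 2 := by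
  have hsplit : ∀ j k, f j k = (if j < k then f j k else 0) + (if k < j then f k j else 0) := by
    intro j k
    rcases lt_trichotomy j k with h | rfl | h
    · simp [h, h.not_gt]
    · simp [hdiag]
    · simp [h, h.not_gt, hsymm j k]
  have htwice : ∑ j, ∑ k, f j k = 2 * ∑ j, ∑ k, (if j < k then f j k else 0) := by
    rw [Finset.sum_congr rfl fun j _ => Finset.sum_congr rfl fun k _ => hsplit j k]
    simp only [Finset.sum_add_distrib]
    rw [Finset.sum_comm (f := fun j k => if k < j then f k j else 0)]
    ring
  linarith

variable {ρ : ι → ℝ} (hρ : ∑ j, ρ j = 1)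
include hρ

lemma sum_sum_mul_mul_sub_sq (a : ι → ℝ) :
    ∑ j, ∑ k, ρ j * ρ k * (a j - a k) ^ 2 = 2 * (∑ j, ρ j * a j ^ 2 - (∑ j, ρ j * a j) ^ 2) := by
  have hexpand : ∀ j k, ρ j * ρ k * (a j - a k) ^ 2
      = ρ j * a j ^ 2 * ρ k + ρ j * (ρ k * a k ^ 2) - 2 * (ρ j * a j * (ρ k * a k)) :=
    fun j k => by ring
  simp_rw [hexpand, Finset.sum_sub_distrib, Finset.sum_add_distrib, ← Finset.mul_sum,
    ← Finset.sum_mul, hρ]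
  ring

lemma sum_sum_ite_lt_mul_mul_sub_sq [LinearOrder ι] (a : ι → ℝ) :
    ∑ j, ∑ k, (if j < k then ρ j * ρ k * (a j - a k) ^ 2 else 0)
      = ∑ j, ρ j * a j ^ 2 - (∑ j, ρ j * a j) ^ 2 := by
  rw [sum_sum_ite_lt_eq_half _ (fun j k => by ring) (fun j => by ring),
    sum_sum_mul_mul_sub_sq hρ]
  ring

variable (hρ0 : ∀ j, 0 ≤ ρ j)
include hρ0

lemma le_one_of_sum_eq_one (j : ι) : ρ j ≤ 1 :=
  hρ ▸ Finset.single_le_sum (fun k _ => hρ0 k) (Finset.mem_univ j)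

lemma sq_sum_mul_le_sum_sq (a : ι → ℝ) : (∑ j, ρ j * a j) ^ 2 ≤ ∑ j, a j ^ 2 := by
  have hvar := sum_sum_mul_mul_sub_sq hρ a
  have hnonneg : 0 ≤ ∑ j, ∑ k, ρ j * ρ k * (a j - a k) ^ 2 :=
    Finset.sum_nonneg fun j _ => Finset.sum_nonneg fun k _ => by positivity [hρ0 j, hρ0 k]
  have hle : ∑ j, ρ j * a j ^ 2 ≤ ∑ j, a j ^ 2 := Finset.sum_le_sum fun j _ =>
    mul_le_of_le_one_left (sq_nonneg _) (le_one_of_sum_eq_one hρ hρ0 j)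
  linarith

lemma abs_sum_mul_le_sum_abs (a : ι → ℝ) : |∑ j, ρ j * a j| ≤ ∑ j, |a j| := by
  refine (Finset.abs_sum_le_sum_abs _ _).trans (Finset.sum_le_sum fun j _ => ?_)
  rw [abs_mul, abs_of_nonneg (hρ0 j)]
  exact mul_le_of_le_one_left (abs_nonneg _) (le_one_of_sum_eq_one hρ hρ0 j)

end WeightedSums

section Mixture

variable {d : ℕ} {w : Fin (d + 1) → ℝ} {g : Fin (d + 1) → ℝ → ℝ}

lemma hasDerivAt_mmix (hg : ∀ j, Differentiable ℝ (g j)) (x : ℝ) :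
    HasDerivAt (mmix d w g) (mmix d w (fun j => deriv (g j)) x) x :=
  HasDerivAt.fun_sum fun j _ => (hg j x).hasDerivAt.const_mul (w j)

lemma differentiable_mmix (hg : ∀ j, Differentiable ℝ (g j)) : Differentiable ℝ (mmix d w g) :=
  fun x => (hasDerivAt_mmix hg x).differentiableAt

lemma deriv_mmix (hg : ∀ j, Differentiable ℝ (g j)) :
    deriv (mmix d w g) = mmix d w (fun j => deriv (g j)) :=
  funext fun x => (hasDerivAt_mmix hg x).deriv

lemma mmix_pos (hw : ∀ j, 0 ≤ w j) (hwsum : ∑ j, w j = 1) (hgpos : ∀ j x, 0 < g j x) (x : ℝ) :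
    0 < mmix d w g x := by
  obtain ⟨j, hj⟩ : ∃ j, 0 < w j := by
    by_contra! h
    have : ∀ j, w j = 0 := fun j => le_antisymm (h j) (hw j)
    simp [this] at hwsum
  exact Finset.sum_pos' (fun k _ => mul_nonneg (hw k) (hgpos k x).le)
    ⟨j, Finset.mem_univ j, mul_pos hj (hgpos j x)⟩

lemma zeta_eq (hw : ∀ j, 0 ≤ w j) (hwsum : ∑ j, w j = 1) (hgpos : ∀ j x, 0 < g j x)
    (hg : ∀ j, Differentiable ℝ (g j)) (x : ℝ) :
    zeta d w g x = x + mmix d w (fun j => deriv (g j)) x / mmix d w g x := by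
  rw [zeta, ((hasDerivAt_mmix hg x).log (mmix_pos hw hwsum hgpos x).ne').deriv]

lemma deriv_log_eq_deriv_div (hgpos : ∀ j x, 0 < g j x) (hg : ∀ j, Differentiable ℝ (g j))
    (j : Fin (d + 1)) (x : ℝ) :
    deriv (fun y => Real.log (g j y)) x = deriv (g j) x / g j x :=
  ((hg j x).hasDerivAt.log (hgpos j x).ne').deriv

section Posterior

variable (hw : ∀ j, 0 ≤ w j) (hwsum : ∑ j, w j = 1) (hgpos : ∀ j x, 0 < g j x) (x : ℝ)
include hw hwsum hgpos

lemma rho_nonneg (j : Fin (d + 1)) : 0 ≤ rho d w g j x :=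
  div_nonneg (mul_nonneg (hw j) (hgpos j x).le) (mmix_pos hw hwsum hgpos x).le

lemma sum_rho : ∑ j, rho d w g j x = 1 := by
  unfold rho
  rw [← Finset.sum_div]
  exact div_self (mmix_pos hw hwsum hgpos x).ne'

lemma sum_rho_mul_div (f : Fin (d + 1) → ℝ → ℝ) :
    ∑ j, rho d w g j x * (f j x / g j x) = mmix d w f x / mmix d w g x := by
  rw [mmix, Finset.sum_div]
  refine Finset.sum_congr rfl fun j _ => ?_
  rw [rho]
  field_simp [(hgpos j x).ne', (mmix_pos hw hwsum hgpos x).ne']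

lemma Dfun_eq (hg : ∀ j, Differentiable ℝ (g j)) :
    Dfun d w g x = (mmix d w (fun j => deriv (g j)) x / mmix d w g x) ^ 2
      - 2 * (mmix d w (fun j => deriv (deriv (g j))) x / mmix d w g x) := by
  have hvar := sum_sum_ite_lt_mul_mul_sub_sq (sum_rho hw hwsum hgpos x)
    (fun j => deriv (g j) x / g j x)
  have hD : ∀ j, rho d w g j x * Dj d g j x = rho d w g j x * (deriv (g j) x / g j x) ^ 2
      - 2 * (rho d w g j x * (deriv (deriv (g j)) x / g j x)) := fun j => by
    rw [Dj, deriv_log_eq_deriv_div hgpos hg]; ring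
  rw [Dfun]
  simp only [zetaj, deriv_log_eq_deriv_div hgpos hg, add_sub_add_left_eq_sub]
  rw [hvar, Finset.sum_congr rfl fun j _ => hD j, Finset.sum_sub_distrib, ← Finset.mul_sum,
    sum_rho_mul_div hw hwsum hgpos x, sum_rho_mul_div hw hwsum hgpos x]
  ring

lemma sq_mmix_deriv_div_le (hg : ∀ j, Differentiable ℝ (g j)) :
    (mmix d w (fun j => deriv (g j)) x / mmix d w g x) ^ 2
      ≤ ∑ j, deriv (fun y => Real.log (g j y)) x ^ 2 := by
  rw [← sum_rho_mul_div hw hwsum hgpos x]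
  simp_rw [← deriv_log_eq_deriv_div hgpos hg]
  exact sq_sum_mul_le_sum_sq (sum_rho hw hwsum hgpos x) (rho_nonneg hw hwsum hgpos x) _

lemma abs_mmix_deriv_deriv_div_le :
    |mmix d w (fun j => deriv (deriv (g j))) x / mmix d w g x|
      ≤ ∑ j, |deriv (deriv (g j)) x / g j x| := by
  rw [← sum_rho_mul_div hw hwsum hgpos x]
  exact abs_sum_mul_le_sum_abs (sum_rho hw hwsum hgpos x) (rho_nonneg hw hwsum hgpos x) _

end Posterior

section Integrability

variable (hw : ∀ j, 0 ≤ w j) (hwsum : ∑ j, w j = 1) (hgpos : ∀ j x, 0 < g j x)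
  {φ : ℝ → ℝ} (hφ : AEStronglyMeasurable φ) (hφ0 : ∀ x, 0 ≤ φ x)
include hw hwsum hgpos hφ hφ0

lemma integrable_sq_mmix_deriv_div_mul (hg : ∀ j, Differentiable ℝ (g j))
    (hg' : ∀ j, Differentiable ℝ (deriv (g j)))
    (hint : ∀ j, Integrable (fun x => deriv (fun y => Real.log (g j y)) x ^ 2 * φ x)) :
    Integrable (fun x => (mmix d w (fun j => deriv (g j)) x / mmix d w g x) ^ 2 * φ x) := by
  have hmeas : AEStronglyMeasurable (fun x => mmix d w (fun j => deriv (g j)) x / mmix d w g x) :=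
    ((differentiable_mmix hg').continuous.div (differentiable_mmix hg).continuous
      fun x => (mmix_pos hw hwsum hgpos x).ne').aestronglyMeasurable
  refine (integrable_finsetSum Finset.univ fun j _ => hint j).mono' ((hmeas.pow 2).mul hφ)
    (ae_of_all _ fun x => ?_)
  rw [← Finset.sum_mul, Real.norm_eq_abs, abs_of_nonneg (mul_nonneg (sq_nonneg _) (hφ0 x))]
  exact mul_le_mul_of_nonneg_right (sq_mmix_deriv_div_le hw hwsum hgpos x hg) (hφ0 x)

lemma integrable_mmix_deriv_deriv_div_mul (hg : ∀ j, Differentiable ℝ (g j))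
    (hint : ∀ j, Integrable (fun x => deriv (deriv (g j)) x / g j x * φ x)) :
    Integrable (fun x => mmix d w (fun j => deriv (deriv (g j))) x / mmix d w g x * φ x) := by
  have hnum : Measurable (mmix d w fun j => deriv (deriv (g j))) := by
    unfold mmix
    fun_prop
  have hmeas := hnum.div (differentiable_mmix (w := w) hg).continuous.measurable
  refine (integrable_finsetSum Finset.univ fun j _ => (hint j).norm).mono'
    (hmeas.aestronglyMeasurable.mul hφ) (ae_of_all _ fun x => ?_)
  simp only [norm_mul, Real.norm_eq_abs, abs_of_nonneg (hφ0 x), ← Finset.sum_mul]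
  exact mul_le_mul_of_nonneg_right (abs_mmix_deriv_deriv_div_le hw hwsum hgpos x) (hφ0 x)

end Integrability

end Mixture

theorem integral_sq_sub_zeta_mul_stdN_sub {d : ℕ} {w : Fin (d + 1) → ℝ}
    {g : Fin (d + 1) → ℝ → ℝ} (c : ℝ) (hw : ∀ j, 0 ≤ w j) (hwsum : ∑ j, w j = 1)
    (hgpos : ∀ j x, 0 < g j x) (hg : ∀ j, Differentiable ℝ (g j))
    (hg' : ∀ j, Differentiable ℝ (deriv (g j)))
    (hint1 : ∀ j, Integrable (fun x => deriv (deriv (g j)) x / g j x * stdN (x - c)))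
    (hint2 : ∀ j, Integrable (fun x => deriv (fun y => Real.log (g j y)) x ^ 2 * stdN (x - c))) :
    ∫ x, (c - zeta d w g x) ^ 2 * stdN (x - c) = 1 - ∫ x, Dfun d w g x * stdN (x - c) := by
  have hφ : AEStronglyMeasurable (fun x => stdN (x - c)) :=
    (continuous_stdN.comp (by fun_prop)).aestronglyMeasurable
  have hφ0 : ∀ x, 0 ≤ stdN (x - c) := fun x => (stdN_pos _).le
  have hm' : deriv (mmix d w g) = mmix d w fun j => deriv (g j) := deriv_mmix hg
  have hm'' : deriv (mmix d w fun j => deriv (g j)) = mmix d w fun j => deriv (deriv (g j)) :=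
    deriv_mmix hg'
  have htweedie := integral_sq_sub_tweedie_mul_stdN_sub (mmix_pos hw hwsum hgpos)
    (differentiable_mmix hg) (hm' ▸ differentiable_mmix hg') c
    (hm' ▸ integrable_sq_mmix_deriv_div_mul hw hwsum hgpos hφ hφ0 hg hg' hint2)
    (hm' ▸ hm'' ▸ integrable_mmix_deriv_deriv_div_mul hw hwsum hgpos hφ hφ0 hg hint1)
  rw [hm', hm''] at htweedie
  simp only [zeta_eq hw hwsum hgpos hg, Dfun_eq hw hwsum hgpos _ hg]
  exact htweedie

/-- SURE risk identity for the posterior mean under a mixture marginal: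
`E ∑ᵢ (μᵢ − ζ(Xᵢ))² = p − E ∑ᵢ D(Xᵢ)` with `Xᵢ ∼ N(μᵢ,1)`. -/
theorem stmt7 (d p : ℕ) (w : Fin (d + 1) → ℝ) (g : Fin (d + 1) → ℝ → ℝ) (μv : Fin p → ℝ)
    (hw : ∀ j, 0 ≤ w j) (hwsum : ∑ j : Fin (d + 1), w j = 1)
    (hgpos : ∀ j x, 0 < g j x)
    (hgdiff : ∀ j, Differentiable ℝ (g j))
    (hgdiff2 : ∀ j, Differentiable ℝ (deriv (g j)))
    (hint1 : ∀ (i : Fin p) (j : Fin (d + 1)),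
      Integrable (fun x : ℝ => (deriv (deriv (g j)) x / g j x) * stdN (x - μv i)))
    (hint2 : ∀ (i : Fin p) (j : Fin (d + 1)),
      Integrable (fun x : ℝ => (deriv (fun y => Real.log (g j y)) x) ^ 2 * stdN (x - μv i))) :
    (∑ i : Fin p, ∫ x : ℝ, (μv i - zeta d w g x) ^ 2 * stdN (x - μv i)) =
      (p : ℝ) - ∑ i : Fin p, ∫ x : ℝ, Dfun d w g x * stdN (x - μv i) := by
  simp_rw [integral_sq_sub_zeta_mul_stdN_sub _ hw hwsum hgpos hgdiff hgdiff2 (hint1 _) (hint2 _),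
    Finset.sum_sub_distrib]
  simp
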